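/- arXiv:1509.05172 — 8 statements merged into one kernel-verified Lean document; each statement's English description precedes it below -/
import Mathlib

section
/- Let P be row-stochastic, d_μ > 0 a probability vector, β ∈ (0,1), and f^T = d_μ^T(I - βP)^{-1}. Then for every vector v, the f-weighted squared norm satisfies ‖v‖_f^2 - β‖Pv‖_f^2 ≥ ‖v‖_{d_μ}^2, where ‖v‖_w^2 = Σ_s w(s) v(s)^2. -/
open Matrix Finset

theorem stmt_3 {S : Type*} [Fintype S] [DecidableEq S]
    (P : Matrix S S ℝ) (hP0 : ∀ s s', 0 ≤ P s s') (hP1 : ∀ s, ∑ s', P s s' = 1)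
    (dμ : S → ℝ) (hd0 : ∀ s, 0 < dμ s) (hd1 : ∑ s, dμ s = 1)
    (β : ℝ) (hβ : β ∈ Set.Ioo (0 : ℝ) 1)
    (f : S → ℝ) (hf : f = Matrix.vecMul dμ (1 - β • P)⁻¹)
    (v : S → ℝ) :
    ∑ s, dμ s * v s ^ 2 ≤
      ∑ s, f s * v s ^ 2 - β * ∑ s, f s * (Matrix.mulVec P v s) ^ 2 := by
  obtain ⟨hβ0, hβ1⟩ := hβ
  set A : Matrix S S ℝ := 1 - β • P with hA
  -- key positivity lemma
  have key : ∀ x : S → ℝ, (∀ s, 0 ≤ A.mulVec x s) → ∀ s, 0 ≤ x s := by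
    intro x hb s
    obtain ⟨s₀, -, hs₀⟩ := Finset.exists_min_image Finset.univ x ⟨s, Finset.mem_univ s⟩
    have hmin : ∀ t, x s₀ ≤ x t := fun t => hs₀ t (Finset.mem_univ t)
    have h1 : x s₀ ≤ P.mulVec x s₀ := by
      have h0 : x s₀ = ∑ s', P s₀ s' * x s₀ := by rw [← Finset.sum_mul, hP1, one_mul]
      rw [h0, Matrix.mulVec, dotProduct]
      exact Finset.sum_le_sum fun i _ => mul_le_mul_of_nonneg_left (hmin i) (hP0 s₀ i)
    have h2 := hb s₀
    have h3 : A.mulVec x s₀ = x s₀ - β * P.mulVec x s₀ := by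
      simp [hA, Matrix.sub_mulVec, Matrix.smul_mulVec, Matrix.one_mulVec]
    have h4 : β * x s₀ ≤ β * P.mulVec x s₀ := by
      exact mul_le_mul_of_nonneg_left h1 hβ0.le
    have h5 : 0 ≤ x s₀ := by nlinarith
    linarith [hmin s]
  have hUnit : IsUnit A := by
    rw [← Matrix.mulVec_injective_iff_isUnit]
    intro x y hxy
    have hz : ∀ z : S → ℝ, A.mulVec z = 0 → z = 0 := by
      intro z hzz
      have h1 : ∀ s, 0 ≤ z s := key z (by simp [hzz])
      have h2 : ∀ s, 0 ≤ -z s := by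
        have := key (-z) (by simp [Matrix.mulVec_neg, hzz])
        simpa using this
      funext s
      have := h1 s; have := h2 s
      show z s = 0
      linarith
    have := hz (x - y) (by rw [Matrix.mulVec_sub, hxy, sub_self])
    exact sub_eq_zero.mp this
  have hdet : IsUnit A.det := (Matrix.isUnit_iff_isUnit_det A).mp hUnit
  have hAinv : A⁻¹ * A = 1 := Matrix.nonsing_inv_mul A hdet
  have hAinv' : A * A⁻¹ = 1 := Matrix.mul_nonsing_inv A hdet
  -- f ᵥ* A = dμ
  have hfA : Matrix.vecMul f A = dμ := by
    rw [hf, Matrix.vecMul_vecMul, hAinv, Matrix.vecMul_one]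
  -- A⁻¹ has nonneg entries
  have hinv0 : ∀ s j, 0 ≤ A⁻¹ s j := by
    intro s j
    have h1 : A.mulVec (A⁻¹.mulVec (Pi.single j 1)) = Pi.single j 1 := by
      rw [Matrix.mulVec_mulVec, hAinv', Matrix.one_mulVec]
    have h2 := key (A⁻¹.mulVec (Pi.single j 1))
      (by rw [h1]; intro t; by_cases ht : t = j
          · subst ht; simp
          · simp [Pi.single_eq_of_ne ht]) s
    rw [Matrix.mulVec_single] at h2
    simpa using h2
  have hf0 : ∀ s, 0 ≤ f s := by
    intro s
    rw [hf, Matrix.vecMul, dotProduct]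
    exact Finset.sum_nonneg fun i _ => mul_nonneg (hd0 i).le (hinv0 i s)
  -- rewrite the left side
  have hlhs : ∑ s, dμ s * v s ^ 2
      = ∑ s, f s * v s ^ 2 - β * ∑ s', f s' * ∑ s, P s' s * v s ^ 2 := by
    have hds : ∀ s, dμ s = f s - β * ∑ s', f s' * P s' s := by
      intro s
      rw [← hfA]
      rw [Matrix.vecMul, dotProduct]
      simp only [hA, Matrix.sub_apply, Matrix.smul_apply, Matrix.one_apply, smul_eq_mul,
        mul_sub, Finset.sum_sub_distrib, Finset.mul_sum]
      congr 1
      · rw [Finset.sum_eq_single s] <;> simp +contextual [eq_comm]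
      · congr 1; ext s'; ring
    calc ∑ s, dμ s * v s ^ 2
        = ∑ s, (f s * v s ^ 2 - β * ∑ s', f s' * P s' s * v s ^ 2) := by
          refine Finset.sum_congr rfl fun s _ => ?_
          rw [hds s, sub_mul, mul_assoc, Finset.sum_mul]
      _ = ∑ s, f s * v s ^ 2 - β * ∑ s', f s' * ∑ s, P s' s * v s ^ 2 := by
          rw [Finset.sum_sub_distrib, ← Finset.mul_sum, Finset.sum_comm]
          congr 2
          refine Finset.sum_congr rfl fun s' _ => ?_
          rw [Finset.mul_sum]
          refine Finset.sum_congr rfl fun s _ => ?_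
          ring
  rw [hlhs]
  have hjensen : ∀ s', (P.mulVec v s') ^ 2 ≤ ∑ s, P s' s * v s ^ 2 := by
    intro s'
    have hcs := Finset.sum_mul_sq_le_sq_mul_sq Finset.univ
      (fun s => Real.sqrt (P s' s)) (fun s => Real.sqrt (P s' s) * v s)
    have e1 : ∀ s, Real.sqrt (P s' s) * (Real.sqrt (P s' s) * v s) = P s' s * v s := by
      intro s
      rw [← mul_assoc, Real.mul_self_sqrt (hP0 s' s)]
    have e2 : ∀ s, Real.sqrt (P s' s) ^ 2 = P s' s := fun s => Real.sq_sqrt (hP0 s' s)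
    have e3 : ∀ s, (Real.sqrt (P s' s) * v s) ^ 2 = P s' s * v s ^ 2 := by
      intro s; rw [mul_pow, e2]
    simp only [e1, e2, e3, hP1] at hcs
    rw [one_mul] at hcs
    calc (P.mulVec v s') ^ 2 = (∑ s, P s' s * v s) ^ 2 := by
          rw [Matrix.mulVec, dotProduct]
      _ ≤ ∑ s, P s' s * v s ^ 2 := hcs
  have hmono : ∑ s', f s' * (P.mulVec v s') ^ 2 ≤ ∑ s', f s' * ∑ s, P s' s * v s ^ 2 :=
    Finset.sum_le_sum fun s' _ => mul_le_mul_of_nonneg_left (hjensen s') (hf0 s')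
  nlinarith
end

section
/- Let P be row-stochastic, d_μ > 0 a probability vector, β ∈ (0,1), f^T = d_μ^T(I - βP)^{-1}, and κ = min_s d_μ(s)/f(s). Then for every vector v, β‖Pv‖_f^2 ≤ (1-κ)‖v‖_f^2. -/
open Matrix Finset

attribute [local instance] Matrix.linftyOpNormedRing Matrix.linftyOpNormedAlgebra

section Aux

variable {S : Type*} [Fintype S] [DecidableEq S] [Nonempty S]

lemma aux_norm_lt {P : Matrix S S ℝ} (hP0 : ∀ s s', 0 ≤ P s s') (hP1 : ∀ s, ∑ s', P s s' = 1)
    {β : ℝ} (hβ : β ∈ Set.Ioo (0 : ℝ) 1) : ‖β • P‖ < 1 := by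
  have hP : ‖P‖ ≤ 1 := by
    rw [Matrix.linfty_opNorm_def]
    have h : ∀ i, (∑ j, ‖P i j‖₊ : NNReal) ≤ 1 := by
      intro i
      rw [← NNReal.coe_le_coe]
      push_cast
      simp only [coe_nnnorm, Real.norm_eq_abs]
      have heq : ∑ j, |P i j| = 1 := by
        rw [Finset.sum_congr rfl fun j _ => abs_of_nonneg (hP0 i j), hP1 i]
      rw [heq]
    calc ((Finset.univ.sup fun i : S => ∑ j, ‖P i j‖₊ : NNReal) : ℝ)
        ≤ ((1 : NNReal) : ℝ) := by exact_mod_cast Finset.sup_le fun i _ => h i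
      _ = 1 := by norm_num
  calc ‖β • P‖ = |β| * ‖P‖ := by rw [norm_smul]; simp [Real.norm_eq_abs]
    _ ≤ |β| * 1 := mul_le_mul_of_nonneg_left hP (abs_nonneg β)
    _ = β := by rw [mul_one, abs_of_pos hβ.1]
    _ < 1 := hβ.2

lemma aux_pow_nonneg {P : Matrix S S ℝ} (hP0 : ∀ s s', 0 ≤ P s s') (n : ℕ) :
    ∀ i j, 0 ≤ (P ^ n) i j := by
  induction n with
  | zero =>
    intro i j
    simp only [pow_zero, Matrix.one_apply]
    split <;> norm_num
  | succ n ih =>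
    intro i j
    rw [pow_succ, Matrix.mul_apply]
    exact Finset.sum_nonneg fun k _ => mul_nonneg (ih i k) (hP0 k j)

lemma aux_hasSum_entry (dμ : S → ℝ) (s : S) {g : ℕ → Matrix S S ℝ} {A : Matrix S S ℝ}
    (h : HasSum g A) : HasSum (fun n => ∑ j, dμ j * g n j s) (∑ j, dμ j * A j s) := by
  let L : Matrix S S ℝ →ₗ[ℝ] ℝ :=
    { toFun := fun B => ∑ j, dμ j * B j s
      map_add' := by intro A B; simp [Finset.sum_add_distrib, mul_add]
      map_smul' := by
        intro c B
        simp [Finset.mul_sum]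
        simp [mul_comm, mul_assoc, mul_left_comm] }
  exact h.mapL L.toContinuousLinearMap

end Aux

theorem stmt_4 {S : Type*} [Fintype S] [DecidableEq S] [Nonempty S]
    (P : Matrix S S ℝ) (hP0 : ∀ s s', 0 ≤ P s s') (hP1 : ∀ s, ∑ s', P s s' = 1)
    (dμ : S → ℝ) (hd0 : ∀ s, 0 < dμ s) (hd1 : ∑ s, dμ s = 1)
    (β : ℝ) (hβ : β ∈ Set.Ioo (0 : ℝ) 1)
    (f : S → ℝ) (hf : f = Matrix.vecMul dμ (1 - β • P)⁻¹)
    (κ : ℝ) (hκ : κ = ⨅ s, dμ s / f s)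
    (v : S → ℝ) :
    β * ∑ s, f s * (Matrix.mulVec P v s) ^ 2 ≤ (1 - κ) * ∑ s, f s * v s ^ 2 := by
  have hβ0 : 0 < β := hβ.1
  have hnorm : ‖β • P‖ < 1 := aux_norm_lt hP0 hP1 hβ
  have hdet : IsUnit (1 - β • P).det := by
    rw [← Matrix.isUnit_iff_isUnit_det]
    exact isUnit_one_sub_of_norm_lt_one hnorm
  -- f ᵥ* (1 - β • P) = dμ
  have hfd : Matrix.vecMul f (1 - β • P) = dμ := by
    rw [hf, Matrix.vecMul_vecMul, Matrix.nonsing_inv_mul _ hdet, Matrix.vecMul_one]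
  -- pointwise version
  have key1 : ∀ s, f s - β * ∑ j, f j * P j s = dμ s := by
    intro s
    have h := congrFun hfd s
    simp only [Matrix.vecMul, dotProduct, Matrix.sub_apply, Matrix.smul_apply,
      Matrix.one_apply, smul_eq_mul, mul_sub, Finset.sum_sub_distrib, mul_ite, mul_one,
      mul_zero, Finset.sum_ite_eq', Finset.mem_univ, if_true] at h
    rw [← h]
    congr 1
    rw [Finset.mul_sum]
    exact Finset.sum_congr rfl fun j _ => by ring
  -- f ≥ dμ pointwise, via Neumann series
  have hge : ∀ s, dμ s ≤ f s := by
    intro s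
    have hgeom : HasSum (fun n : ℕ => (β • P) ^ n) (1 - β • P)⁻¹ := by
      rw [Matrix.nonsing_inv_eq_ringInverse]
      exact hasSum_geom_series_inverse _ hnorm
    have hsum := aux_hasSum_entry dμ s hgeom
    have hfs : f s = ∑ j, dμ j * (1 - β • P)⁻¹ j s := by
      rw [hf]; simp [Matrix.vecMul, dotProduct]
    have h0 : (∑ j, dμ j * ((β • P) ^ 0) j s) = dμ s := by
      simp [Matrix.one_apply]
    rw [hfs]
    calc dμ s = ∑ j, dμ j * ((β • P) ^ 0) j s := h0.symm
      _ ≤ ∑ j, dμ j * (1 - β • P)⁻¹ j s := by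
          refine le_hasSum hsum 0 fun n _ => ?_
          refine Finset.sum_nonneg fun j _ => mul_nonneg (hd0 j).le ?_
          have : ∀ i j, 0 ≤ (β • P) i j := fun i j =>
            mul_nonneg hβ0.le (hP0 i j)
          exact aux_pow_nonneg this n j s
  have hf0 : ∀ s, 0 < f s := fun s => lt_of_lt_of_le (hd0 s) (hge s)
  -- κ f ≤ dμ
  have hκf : ∀ s, κ * f s ≤ dμ s := by
    intro s
    have hκle : κ ≤ dμ s / f s := by
      rw [hκ]
      exact ciInf_le (Finite.bddBelow_range _) s
    rwa [le_div_iff₀ (hf0 s)] at hκle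
  -- Cauchy-Schwarz / Jensen pointwise
  have hCS : ∀ s, (Matrix.mulVec P v s) ^ 2 ≤ ∑ j, P s j * v j ^ 2 := by
    intro s
    have h := sum_sq_le_sum_mul_sum_of_sq_eq_mul (Finset.univ : Finset S)
      (r := fun j => P s j * v j) (f := fun j => P s j) (g := fun j => P s j * v j ^ 2)
      (fun j _ => hP0 s j) (fun j _ => mul_nonneg (hP0 s j) (sq_nonneg _))
      (fun j _ => by ring)
    rw [hP1 s, one_mul] at h
    have hmv : Matrix.mulVec P v s = ∑ j, P s j * v j := by
      simp [Matrix.mulVec, dotProduct]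
    rw [hmv]
    exact h
  -- main chain
  calc β * ∑ s, f s * (Matrix.mulVec P v s) ^ 2
      ≤ β * ∑ s, f s * (∑ j, P s j * v j ^ 2) := by
        have : ∑ s, f s * (Matrix.mulVec P v s) ^ 2 ≤ ∑ s, f s * (∑ j, P s j * v j ^ 2) :=
          Finset.sum_le_sum fun s _ => mul_le_mul_of_nonneg_left (hCS s) (hf0 s).le
        exact mul_le_mul_of_nonneg_left this hβ0.le
    _ = ∑ j, (f j - dμ j) * v j ^ 2 := by
        rw [Finset.mul_sum]
        simp_rw [Finset.mul_sum]
        rw [Finset.sum_comm]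
        refine Finset.sum_congr rfl fun j _ => ?_
        have hk : f j - dμ j = β * ∑ i, f i * P i j := by linarith [key1 j]
        rw [hk, Finset.mul_sum, Finset.sum_mul]
        exact Finset.sum_congr rfl fun i _ => by ring
    _ ≤ ∑ j, (1 - κ) * (f j * v j ^ 2) := by
        refine Finset.sum_le_sum fun j _ => ?_
        have h1 : f j - dμ j ≤ (1 - κ) * f j := by
          have := hκf j; nlinarith
        calc (f j - dμ j) * v j ^ 2 ≤ ((1 - κ) * f j) * v j ^ 2 :=
              mul_le_mul_of_nonneg_right h1 (sq_nonneg _)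
          _ = (1 - κ) * (f j * v j ^ 2) := by ring
    _ = (1 - κ) * ∑ s, f s * v s ^ 2 := by rw [Finset.mul_sum]
end

section
/- Let P be row-stochastic, R a vector, γ ∈ [0,1), and T(v) = R + γPv the Bellman operator. With f^T = d_μ^T(I - βP)^{-1} for some β ∈ (0,1) and κ = min_s d_μ(s)/f(s), the operator T satisfies ‖T v_1 - T v_2‖_f ≤ sqrt(γ²(1-κ)/β) · ‖v_1 - v_2‖_f for all v_1, v_2. In particular, if β > γ²(1-κ), then T is a contraction in the f-weighted Euclidean norm. -/
/-!
Since `(I - βP)⁻¹ = ∑ βᵏ Pᵏ` has nonnegative entries, the weight `f` is nonnegative and solves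
`f = dμ + β f P`; together with `κ f ≤ dμ` this gives `f P ≤ ((1 - κ) / β) f`. Jensen's
inequality on each row of `P` gives `(P u)² ≤ P (u²)`, hence
`∑ f (P u)² ≤ ∑ (f P) u² ≤ ((1 - κ) / β) ∑ f u²`, and `T v₁ - T v₂ = γ P (v₁ - v₂)`.
-/

open Matrix Finset

section NeumannSeries

attribute [local instance] Matrix.linftyOpNormedRing Matrix.linftyOpNormedAlgebra

variable {n : Type*} [Fintype n] [DecidableEq n]

theorem Matrix.linfty_opNorm_le_one_of_nonneg {P : Matrix n n ℝ} (hP0 : ∀ i j, 0 ≤ P i j)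
    (hP1 : ∀ i, ∑ j, P i j ≤ 1) : ‖P‖ ≤ 1 := by
  rw [linfty_opNorm_def, ← NNReal.coe_one, NNReal.coe_le_coe]
  refine Finset.sup_le fun i _ => ?_
  rw [← NNReal.coe_le_coe]
  push_cast
  simpa only [Real.norm_of_nonneg (hP0 i _)] using hP1 i

theorem Matrix.linfty_opNorm_smul_lt_one {P : Matrix n n ℝ} (hP0 : ∀ i j, 0 ≤ P i j)
    (hP1 : ∀ i, ∑ j, P i j ≤ 1) {β : ℝ} (hβ0 : 0 ≤ β) (hβ1 : β < 1) : ‖β • P‖ < 1 := by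
  rw [norm_smul, Real.norm_of_nonneg hβ0]
  nlinarith [linfty_opNorm_le_one_of_nonneg hP0 hP1, norm_nonneg P]

theorem Matrix.inv_one_sub_apply_nonneg {M : Matrix n n ℝ} (hM0 : ∀ i j, 0 ≤ M i j)
    (hM : ‖M‖ < 1) (i j : n) : 0 ≤ (1 - M)⁻¹ i j := by
  have : CompleteSpace (Matrix n n ℝ) := FiniteDimensional.complete ℝ _
  rw [nonsing_inv_eq_ringInverse]
  exact (Pi.hasSum.1 (Pi.hasSum.1 (hasSum_geom_series_inverse M hM) i) j).nonneg
    fun k => pow_apply_nonneg hM0 k i j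

theorem Matrix.isUnit_det_one_sub_smul {P : Matrix n n ℝ} (hP0 : ∀ i j, 0 ≤ P i j)
    (hP1 : ∀ i, ∑ j, P i j ≤ 1) {β : ℝ} (hβ0 : 0 ≤ β) (hβ1 : β < 1) :
    IsUnit (1 - β • P).det :=
  (isUnit_iff_isUnit_det _).1 <|
    isUnit_one_sub_of_norm_lt_one (linfty_opNorm_smul_lt_one hP0 hP1 hβ0 hβ1)

theorem Matrix.inv_one_sub_smul_apply_nonneg {P : Matrix n n ℝ} (hP0 : ∀ i j, 0 ≤ P i j)
    (hP1 : ∀ i, ∑ j, P i j ≤ 1) {β : ℝ} (hβ0 : 0 ≤ β) (hβ1 : β < 1) (i j : n) :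
    0 ≤ (1 - β • P)⁻¹ i j :=
  inv_one_sub_apply_nonneg (fun i j => mul_nonneg hβ0 (hP0 i j))
    (linfty_opNorm_smul_lt_one hP0 hP1 hβ0 hβ1) i j

end NeumannSeries

section WeightedNorm

variable {n : Type*} [Fintype n]

theorem Matrix.vecMul_inv_one_sub_smul_eq [DecidableEq n] {P : Matrix n n ℝ} {β : ℝ}
    (hdet : IsUnit (1 - β • P).det) (d : n → ℝ) :
    d ᵥ* (1 - β • P)⁻¹ = d + β • (d ᵥ* (1 - β • P)⁻¹) ᵥ* P := by
  have h : d ᵥ* (1 - β • P)⁻¹ ᵥ* (1 - β • P) = d := by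
    rw [vecMul_vecMul, nonsing_inv_mul _ hdet, vecMul_one]
  rw [vecMul_sub, vecMul_one, vecMul_smul] at h
  exact eq_add_of_sub_eq h

theorem le_of_eq_add_smul_vecMul {P : Matrix n n ℝ} (hP0 : ∀ i j, 0 ≤ P i j) {f d : n → ℝ}
    (hf : ∀ i, 0 ≤ f i) {β : ℝ} (hβ : 0 ≤ β) (hfix : f = d + β • f ᵥ* P) (s : n) : d s ≤ f s := by
  have hs : f s = d s + β * (f ᵥ* P) s := by simpa using congrFun hfix s
  have hfP : 0 ≤ (f ᵥ* P) s := sum_nonneg fun t _ => mul_nonneg (hf t) (hP0 t s)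
  nlinarith

theorem vecMul_apply_le_of_eq_add_smul_vecMul {P : Matrix n n ℝ} {f d : n → ℝ} {β κ : ℝ}
    (hβ : 0 < β) (hfix : f = d + β • f ᵥ* P) (hκ : ∀ s, κ * f s ≤ d s) (s : n) :
    (f ᵥ* P) s ≤ (1 - κ) / β * f s := by
  have hs : f s = d s + β * (f ᵥ* P) s := by simpa using congrFun hfix s
  rw [div_mul_eq_mul_div, le_div_iff₀ hβ]
  linarith [hκ s]

theorem Matrix.mulVec_apply_sq_le {m : Type*} {P : Matrix m n ℝ} (hP0 : ∀ i j, 0 ≤ P i j)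
    (hP1 : ∀ i, ∑ j, P i j ≤ 1) (u : n → ℝ) (i : m) :
    (P *ᵥ u) i ^ 2 ≤ ∑ j, P i j * u j ^ 2 := by
  have hsq : ∀ j, 0 ≤ P i j * u j ^ 2 := fun j => mul_nonneg (hP0 i j) (sq_nonneg _)
  have hcs := sum_sq_le_sum_mul_sum_of_sq_le_mul univ (r := fun j => P i j * u j)
    (fun j _ => hP0 i j) (fun j _ => hsq j) (fun j _ => le_of_eq (by ring))
  calc (P *ᵥ u) i ^ 2 ≤ (∑ j, P i j) * ∑ j, P i j * u j ^ 2 := hcs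
    _ ≤ ∑ j, P i j * u j ^ 2 := mul_le_of_le_one_left (sum_nonneg fun j _ => hsq j) (hP1 i)

theorem Matrix.sum_mul_mulVec_sq_le {P : Matrix n n ℝ} (hP0 : ∀ i j, 0 ≤ P i j)
    (hP1 : ∀ i, ∑ j, P i j ≤ 1) {f : n → ℝ} (hf : ∀ i, 0 ≤ f i) {c : ℝ}
    (hfP : ∀ j, (f ᵥ* P) j ≤ c * f j) (u : n → ℝ) :
    ∑ i, f i * (P *ᵥ u) i ^ 2 ≤ c * ∑ i, f i * u i ^ 2 :=
  calc ∑ i, f i * (P *ᵥ u) i ^ 2 ≤ ∑ i, f i * ∑ j, P i j * u j ^ 2 :=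
        sum_le_sum fun i _ => mul_le_mul_of_nonneg_left (mulVec_apply_sq_le hP0 hP1 u i) (hf i)
    _ = ∑ j, (f ᵥ* P) j * u j ^ 2 := by
        simp only [vecMul, dotProduct, mul_sum, sum_mul]
        rw [sum_comm]
        simp only [mul_assoc]
    _ ≤ ∑ j, c * f j * u j ^ 2 :=
        sum_le_sum fun j _ => mul_le_mul_of_nonneg_right (hfP j) (sq_nonneg _)
    _ = c * ∑ i, f i * u i ^ 2 := by simp only [mul_sum, mul_assoc]

end WeightedNorm

theorem stmt_5_general {S : Type*} [Fintype S] [DecidableEq S]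
    (P : Matrix S S ℝ) (hP0 : ∀ s s', 0 ≤ P s s') (hP1 : ∀ s, ∑ s', P s s' = 1)
    (dμ : S → ℝ) (hd0 : ∀ s, 0 < dμ s)
    (β : ℝ) (hβ : β ∈ Set.Ioo (0 : ℝ) 1)
    (γ : ℝ)
    (R : S → ℝ)
    (T : (S → ℝ) → (S → ℝ)) (hT : ∀ v, T v = R + γ • Matrix.mulVec P v)
    (f : S → ℝ) (hf : f = Matrix.vecMul dμ (1 - β • P)⁻¹)
    (κ : ℝ) (hκ : κ = ⨅ s, dμ s / f s) :
    (∀ v₁ v₂ : S → ℝ,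
      Real.sqrt (∑ s, f s * (T v₁ s - T v₂ s) ^ 2) ≤
        Real.sqrt (γ ^ 2 * (1 - κ) / β) *
          Real.sqrt (∑ s, f s * (v₁ s - v₂ s) ^ 2)) ∧
      (γ ^ 2 * (1 - κ) < β → Real.sqrt (γ ^ 2 * (1 - κ) / β) < 1) := by
  obtain ⟨hβ0, hβ1⟩ := hβ
  have hP1' : ∀ s, ∑ s', P s s' ≤ 1 := fun s => (hP1 s).le
  have hf0 : ∀ s, 0 ≤ f s := fun s => hf ▸ sum_nonneg fun t _ =>
    mul_nonneg (hd0 t).le (inv_one_sub_smul_apply_nonneg hP0 hP1' hβ0.le hβ1 t s)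
  have hfix : f = dμ + β • f ᵥ* P := by
    rw [hf]; exact vecMul_inv_one_sub_smul_eq (isUnit_det_one_sub_smul hP0 hP1' hβ0.le hβ1) dμ
  have hκf : ∀ s, κ * f s ≤ dμ s := fun s =>
    (le_div_iff₀ ((hd0 s).trans_le (le_of_eq_add_smul_vecMul hP0 hf0 hβ0.le hfix s))).1
      (hκ ▸ ciInf_le (Finite.bddBelow_range _) s)
  refine ⟨fun v₁ v₂ => ?_, fun h => (Real.sqrt_lt' one_pos).2 (by rwa [one_pow, div_lt_one hβ0])⟩
  have hTsub : ∀ s, T v₁ s - T v₂ s = γ * (P *ᵥ (v₁ - v₂)) s := fun s => by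
    simp only [hT, mulVec_sub, Pi.add_apply, Pi.smul_apply, Pi.sub_apply, smul_eq_mul]; ring
  calc √(∑ s, f s * (T v₁ s - T v₂ s) ^ 2)
      = √(γ ^ 2 * ∑ s, f s * (P *ᵥ (v₁ - v₂)) s ^ 2) := by
        simp only [hTsub, mul_sum]; congr 1; exact sum_congr rfl fun s _ => by ring
    _ ≤ √(γ ^ 2 * ((1 - κ) / β * ∑ s, f s * (v₁ - v₂) s ^ 2)) :=
        Real.sqrt_le_sqrt <| mul_le_mul_of_nonneg_left (sum_mul_mulVec_sq_le hP0 hP1' hf0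
          (vecMul_apply_le_of_eq_add_smul_vecMul hβ0 hfix hκf) _) (sq_nonneg γ)
    _ = √(γ ^ 2 * (1 - κ) / β) * √(∑ s, f s * (v₁ s - v₂ s) ^ 2) := by
        rw [← Real.sqrt_mul' _ (sum_nonneg fun s _ => mul_nonneg (hf0 s) (sq_nonneg _))]
        congr 1; simp only [Pi.sub_apply]; ring

theorem stmt_5 {S : Type*} [Fintype S] [DecidableEq S] [Nonempty S]
    (P : Matrix S S ℝ) (hP0 : ∀ s s', 0 ≤ P s s') (hP1 : ∀ s, ∑ s', P s s' = 1)
    (dμ : S → ℝ) (hd0 : ∀ s, 0 < dμ s) (hd1 : ∑ s, dμ s = 1)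
    (β : ℝ) (hβ : β ∈ Set.Ioo (0 : ℝ) 1)
    (γ : ℝ) (hγ : γ ∈ Set.Ico (0 : ℝ) 1)
    (R : S → ℝ)
    (T : (S → ℝ) → (S → ℝ)) (hT : ∀ v, T v = R + γ • Matrix.mulVec P v)
    (f : S → ℝ) (hf : f = Matrix.vecMul dμ (1 - β • P)⁻¹)
    (κ : ℝ) (hκ : κ = ⨅ s, dμ s / f s) :
    (∀ v₁ v₂ : S → ℝ,
      Real.sqrt (∑ s, f s * (T v₁ s - T v₂ s) ^ 2) ≤
        Real.sqrt (γ ^ 2 * (1 - κ) / β) *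
          Real.sqrt (∑ s, f s * (v₁ s - v₂ s) ^ 2)) ∧
      (γ ^ 2 * (1 - κ) < β → Real.sqrt (γ ^ 2 * (1 - κ) / β) < 1) :=
  stmt_5_general P hP0 hP1 dμ hd0 β hβ γ R T hT f hf κ hκ
end

section
/- Let V* be the unique fixed point of the projected operator Π_f T, where T is a γ'-contraction in the f-weighted norm with γ' = sqrt(γ²(1-κ)/β) < 1 and Π_f is the orthogonal projection (in f-norm) onto a linear subspace. Let V^π be the fixed point of T. Then ‖V* - V^π‖_f ≤ (1/sqrt(1 - γ'²)) · ‖Π_f V^π - V^π‖_f. -/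
/-!
Write `P` for the orthogonal projection onto `W`. Since `V* ∈ W`, the vectors `V* - P Vπ ∈ W` and
`P Vπ - Vπ ∈ Wᗮ` are orthogonal, so `‖V* - Vπ‖² = ‖V* - P Vπ‖² + ‖P Vπ - Vπ‖²`. As `P` is
`1`-Lipschitz and `V*`, `Vπ` are fixed points of `P ∘ T` and `T`,
`‖V* - P Vπ‖ = ‖P (T V*) - P (T Vπ)‖ ≤ γ' ‖V* - Vπ‖`, hence `(1 - γ'²) ‖V* - Vπ‖² ≤ ‖P Vπ - Vπ‖²`.
-/

theorem le_one_div_sqrt_one_sub_sq_mul {a b c γ : ℝ} (hγ : γ < 1) (ha : 0 ≤ a) (hb : 0 ≤ b)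
    (hc : 0 ≤ c) (hab : a ≤ γ * b) (hpyth : b ^ 2 = a ^ 2 + c ^ 2) :
    b ≤ 1 / Real.sqrt (1 - γ ^ 2) * c := by
  rcases lt_or_ge γ 0 with hneg | hnonneg
  · -- `0 ≤ a ≤ γ b ≤ 0` with `γ < 0` forces `b = 0`
    have hb0 : b = 0 := by nlinarith
    rw [hb0]
    positivity
  have hpos : 0 < 1 - γ ^ 2 := by nlinarith
  have hsq : (Real.sqrt (1 - γ ^ 2) * b) ^ 2 ≤ c ^ 2 := by
    rw [mul_pow, Real.sq_sqrt hpos.le]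
    nlinarith [mul_le_mul hab hab ha (by linarith)]
  rw [one_div_mul_eq_div, le_div_iff₀' (Real.sqrt_pos.mpr hpos)]
  exact abs_le_of_sq_le_sq' hsq hc |>.2

theorem Submodule.norm_sub_sq_eq_norm_sub_starProjection_sq_add {X : Type*}
    [NormedAddCommGroup X] [InnerProductSpace ℝ X] (W : Submodule ℝ X) [W.HasOrthogonalProjection]
    {w : X} (hw : w ∈ W) (v : X) :
    ‖w - v‖ ^ 2 = ‖w - W.starProjection v‖ ^ 2 + ‖W.starProjection v - v‖ ^ 2 := by
  have hperp : W.starProjection v - v ∈ Wᗮ := by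
    rw [← neg_sub]
    exact Wᗮ.neg_mem (W.sub_starProjection_mem_orthogonal v)
  have hinner : inner ℝ (w - W.starProjection v) (W.starProjection v - v) = 0 :=
    W.inner_right_of_mem_orthogonal (W.sub_mem hw (W.starProjection_apply_mem v)) hperp
  simp only [sq]
  rw [← norm_add_sq_eq_norm_sq_add_norm_sq_real hinner, sub_add_sub_cancel]

theorem stmt_7_general {X : Type*} [NormedAddCommGroup X] [InnerProductSpace ℝ X]
    (W : Submodule ℝ X) [W.HasOrthogonalProjection]
    (T : X → X) (γ' : ℝ) (hγ'lt : γ' < 1)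
    (hT : ∀ x y, ‖T x - T y‖ ≤ γ' * ‖x - y‖)
    (Vπ : X) (hVπ : T Vπ = Vπ)
    (Vstar : X)
    (hVstar : ((W.orthogonalProjectionOnto (T Vstar) : W) : X) = Vstar) :
    ‖Vstar - Vπ‖ ≤
      (1 / Real.sqrt (1 - γ' ^ 2)) * ‖((W.orthogonalProjectionOnto Vπ : W) : X) - Vπ‖ := by
  simp only [Submodule.coe_orthogonalProjectionOnto_apply] at hVstar ⊢
  have hVstarW : Vstar ∈ W := hVstar ▸ W.starProjection_apply_mem _
  have hstep : ‖Vstar - W.starProjection Vπ‖ ≤ γ' * ‖Vstar - Vπ‖ :=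
    calc ‖Vstar - W.starProjection Vπ‖
      _ = ‖W.starProjection (T Vstar) - W.starProjection (T Vπ)‖ := by rw [hVstar, hVπ]
      _ ≤ ‖T Vstar - T Vπ‖ := by
        simpa using W.lipschitzWith_starProjection.norm_sub_le (T Vstar) (T Vπ)
      _ ≤ γ' * ‖Vstar - Vπ‖ := hT Vstar Vπ
  exact le_one_div_sqrt_one_sub_sq_mul hγ'lt (norm_nonneg _) (norm_nonneg _) (norm_nonneg _) hstep
    (W.norm_sub_sq_eq_norm_sub_starProjection_sq_add hVstarW Vπ)

theorem stmt_7 {X : Type*} [NormedAddCommGroup X] [InnerProductSpace ℝ X]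
    [CompleteSpace X]
    (W : Submodule ℝ X) [W.HasOrthogonalProjection]
    (T : X → X) (γ' γ κ β : ℝ) (hβ : 0 < β)
    (hγ' : γ' = Real.sqrt (γ ^ 2 * (1 - κ) / β)) (hγ'lt : γ' < 1)
    (hT : ∀ x y, ‖T x - T y‖ ≤ γ' * ‖x - y‖)
    (Vπ : X) (hVπ : T Vπ = Vπ)
    (Vstar : X) (hVstarW : Vstar ∈ W)
    (hVstar : ((W.orthogonalProjectionOnto (T Vstar) : W) : X) = Vstar) :
    ‖Vstar - Vπ‖ ≤
      (1 / Real.sqrt (1 - γ' ^ 2)) * ‖((W.orthogonalProjectionOnto Vπ : W) : X) - Vπ‖ :=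
  stmt_7_general W T γ' hγ'lt hT Vπ hVπ Vstar hVstar
end

section
/- For ε ∈ (0,1) and β ∈ (0,1), let P be the 2×2 row-stochastic matrix with both rows equal to (ε, 1-ε), d_μ = (1-ε, ε), and f^T = d_μ^T(I-βP)^{-1}. Then f = (1/(1-β))·(1 + 2εβ - ε - β, -2εβ + ε + β), and for v = (0,1)^T, ‖v‖_f² = (ε + β - 2εβ)/(1-β) and ‖Pv‖_f² = (1-ε)²/(1-β). -/
open Matrix Finset

theorem stmt_8 (ε β : ℝ) (hε : ε ∈ Set.Ioo (0 : ℝ) 1) (hβ : β ∈ Set.Ioo (0 : ℝ) 1)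
    (P : Matrix (Fin 2) (Fin 2) ℝ) (hP : P = !![ε, 1 - ε; ε, 1 - ε])
    (dμ : Fin 2 → ℝ) (hdμ : dμ = ![1 - ε, ε])
    (f : Fin 2 → ℝ) (hf : f = Matrix.vecMul dμ (1 - β • P)⁻¹)
    (v : Fin 2 → ℝ) (hv : v = ![0, 1]) :
    f = (1 / (1 - β)) • ![1 + 2 * ε * β - ε - β, -(2 * ε * β) + ε + β] ∧
      ∑ s, f s * v s ^ 2 = (ε + β - 2 * ε * β) / (1 - β) ∧
      ∑ s, f s * (Matrix.mulVec P v s) ^ 2 = (1 - ε) ^ 2 / (1 - β) := by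
  obtain ⟨hβ0, hβ1⟩ := hβ
  have hb : (1 : ℝ) - β ≠ 0 := by linarith
  have hinv : (1 - β • P)⁻¹ =
      (1 / (1 - β)) • !![1 - β + β * ε, β * (1 - ε); β * ε, 1 - β * ε] := by
    apply Matrix.inv_eq_right_inv
    subst hP
    ext i j
    fin_cases i <;> fin_cases j <;>
      simp [Matrix.mul_apply, Fin.sum_univ_two, Matrix.one_apply] <;>
      field_simp <;> ring
  have hff : f = (1 / (1 - β)) • ![1 + 2 * ε * β - ε - β, -(2 * ε * β) + ε + β] := by
    subst hf hdμ
    rw [hinv]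
    ext j
    fin_cases j <;>
      simp [Matrix.vecMul, dotProduct, Fin.sum_univ_two] <;>
      field_simp <;> ring
  refine ⟨hff, ?_, ?_⟩ <;>
    subst hP hv <;>
    rw [hff] <;>
    simp [Fin.sum_univ_two, Matrix.mulVec, dotProduct] <;>
    field_simp <;> ring
end

section
/- Fix β with 2β² ≥ 1 and 2β ≠ 1, and define F^τ = ((2β)^{τ+1} - 1)/(2β - 1). Then the series (1/4)·Σ_{i=0}^∞ 2^{-i} (F^i)² diverges to infinity. -/
open Filter

theorem stmt_10 (β : ℝ) (hβ : 1 ≤ 2 * β ^ 2) (hβ' : 2 * β ≠ 1)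
    (F : ℕ → ℝ) (hF : ∀ τ, F τ = ((2 * β) ^ (τ + 1) - 1) / (2 * β - 1)) :
    Tendsto (fun n : ℕ => (1 / 4) * ∑ i ∈ Finset.range n, ((1 : ℝ) / 2) ^ i * F i ^ 2)
      atTop atTop := by
  have hne : (2 * β - 1) ≠ 0 := sub_ne_zero.mpr hβ'
  have hD : 0 < (2 * β - 1) ^ 2 := by positivity
  set c : ℝ := 1 / (2 * (2 * β - 1) ^ 2) with hc_def
  have hc : 0 < c := by positivity
  have key : ∀ i : ℕ, 1 ≤ i → c ≤ (1 / 2 : ℝ) ^ i * F i ^ 2 := by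
    intro i hi
    rw [hF]
    have hx2 : (2 : ℝ) ≤ (2 * β) ^ 2 := by nlinarith
    set t : ℝ := (2 * β) ^ (i + 1) with ht_def
    have ht2 : (2 : ℝ) ^ (i + 1) ≤ t ^ 2 := by
      rw [ht_def, ← pow_mul, mul_comm (i + 1) 2, pow_mul]
      exact pow_le_pow_left₀ (by norm_num) hx2 (i + 1)
    have ht4 : (4 : ℝ) ≤ t ^ 2 := by
      refine le_trans ?_ ht2
      have : (2 : ℝ) ^ 2 ≤ 2 ^ (i + 1) := pow_le_pow_right₀ one_le_two (by omega)
      norm_num at this ⊢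
      linarith
    have h1 : t ^ 2 / 4 ≤ (t - 1) ^ 2 := by nlinarith [sq_nonneg (t - 2)]
    have hp : (0 : ℝ) < 2 ^ i := by positivity
    have h2 : (1 : ℝ) / 2 ≤ (1 / 2 : ℝ) ^ i * (t - 1) ^ 2 := by
      have e : ((1 : ℝ) / 2) ^ i = (2 ^ i)⁻¹ := by rw [one_div, inv_pow]
      rw [e, ← div_eq_inv_mul, le_div_iff₀ hp]
      have hs : (2 : ℝ) ^ (i + 1) = 2 * 2 ^ i := by rw [pow_succ, mul_comm]
      nlinarith
    have e2 : c = (1 / 2 : ℝ) / (2 * β - 1) ^ 2 := by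
      rw [hc_def]; field_simp
    calc c = (1 / 2 : ℝ) / (2 * β - 1) ^ 2 := e2
      _ ≤ ((1 / 2 : ℝ) ^ i * (t - 1) ^ 2) / (2 * β - 1) ^ 2 := by gcongr
      _ = (1 / 2 : ℝ) ^ i * ((t - 1) / (2 * β - 1)) ^ 2 := by
          field_simp
  have lower : ∀ n : ℕ, c * ((n : ℝ) - 1) ≤
      ∑ i ∈ Finset.range n, (1 / 2 : ℝ) ^ i * F i ^ 2 := by
    intro n
    induction n with
    | zero => simp; nlinarith
    | succ n ih =>
      rw [Finset.sum_range_succ]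
      rcases Nat.eq_zero_or_pos n with h0 | h1
      · subst h0
        simp only [Finset.range_zero, Finset.sum_empty, zero_add]
        push_cast
        have : (0 : ℝ) ≤ (1 / 2 : ℝ) ^ 0 * F 0 ^ 2 := by positivity
        linarith
      · have hk := key n h1
        push_cast
        linarith
  have hg : Tendsto (fun n : ℕ => (1 / 4 : ℝ) * (c * ((n : ℝ) - 1))) atTop atTop := by
    apply Tendsto.const_mul_atTop (by norm_num : (0:ℝ) < 1 / 4)
    apply Tendsto.const_mul_atTop hc
    exact tendsto_atTop_add_const_right _ _ tendsto_natCast_atTop_atTop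
  apply tendsto_atTop_mono _ hg
  intro n
  have := lower n
  have h14 : (0:ℝ) < 1/4 := by norm_num
  nlinarith [lower n]
end

section
/- Let P be row-stochastic, d_μ > 0 a probability vector, λ ∈ [0,1), β ∈ (0,1), m^T = d_μ^T(I - P^{λ,β})^{-1} with P^{λ,β} = I - (I-λβP)^{-1}(I-βP), and ζ = β(1-λ)/(1-λβ). Then for every vector v: ‖v‖_m² - (1/ζ)‖P^{λ,β}v‖_m² ≥ ‖v‖_{d_μ}², where ‖v‖_w² = Σ_s w(s)v(s)². -/
/-!
Write `Q = P^{λ,β}`. From `1 - Q = (1 - λβP)⁻¹(1 - βP)` one gets `Q = β(1 - λ) (1 - λβP)⁻¹ P`,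
a nonnegative matrix with row sums `ζ < 1`. Hence `1 - Q` is invertible with nonnegative inverse
(a discrete minimum principle), so `m = d_μ (1 - Q)⁻¹ ≥ 0` and `m Q = m - d_μ`. Cauchy–Schwarz in
each row gives `(Qv)_s² ≤ ζ (Q v²)_s`; weighting by `m` and summing,
`‖Qv‖²_m ≤ ζ ⟨m Q, v²⟩ = ζ (‖v‖²_m - ‖v‖²_{d_μ})`.
-/

open Matrix Finset

namespace Matrix

variable {n : Type*} [Fintype n]

theorem sq_mulVec_le_rowSum_mul {M : Matrix n n ℝ} (hM : ∀ i j, 0 ≤ M i j) (v : n → ℝ) (i : n) :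
    (M *ᵥ v) i ^ 2 ≤ (∑ j, M i j) * ∑ j, M i j * v j ^ 2 :=
  sum_sq_le_sum_mul_sum_of_sq_le_mul _ (fun j _ => hM i j)
    (fun j _ => mul_nonneg (hM i j) (sq_nonneg _)) (fun j _ => by ring_nf; rfl)

theorem sum_mul_sq_mulVec_le {M : Matrix n n ℝ} (hM0 : ∀ i j, 0 ≤ M i j) {ζ : ℝ}
    (hM1 : ∀ i, ∑ j, M i j ≤ ζ) {w : n → ℝ} (hw : ∀ i, 0 ≤ w i) (v : n → ℝ) :
    ∑ i, w i * (M *ᵥ v) i ^ 2 ≤ ζ * ∑ j, (w ᵥ* M) j * v j ^ 2 :=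
  calc ∑ i, w i * (M *ᵥ v) i ^ 2 ≤ ∑ i, w i * (ζ * (M *ᵥ (v ^ 2)) i) := by
        gcongr with i
        · exact hw i
        refine (sq_mulVec_le_rowSum_mul hM0 v i).trans (mul_le_mul_of_nonneg_right (hM1 i) ?_)
        exact sum_nonneg fun j _ => mul_nonneg (hM0 i j) (sq_nonneg _)
    _ = ζ * (w ⬝ᵥ (M *ᵥ v ^ 2)) := by
        rw [dotProduct, mul_sum]
        exact sum_congr rfl fun i _ => mul_left_comm _ _ _
    _ = ζ * ∑ j, (w ᵥ* M) j * v j ^ 2 := by rw [dotProduct_mulVec]; rfl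

variable [DecidableEq n]

theorem nonneg_of_nonneg_one_sub_mulVec {M : Matrix n n ℝ} (hM0 : ∀ i j, 0 ≤ M i j)
    (hM1 : ∀ i, ∑ j, M i j < 1) {u : n → ℝ} (hu : 0 ≤ (1 - M) *ᵥ u) : 0 ≤ u := by
  -- at a minimum `k` of `u`, `u k ≥ ∑ j, M k j * u j ≥ (∑ j, M k j) * u k` forces `u k ≥ 0`
  intro i
  have : Nonempty n := ⟨i⟩
  obtain ⟨k, hk⟩ := Finite.exists_min u
  have hfix : ∑ j, M k j * u j ≤ u k := by
    have := hu k
    rwa [Pi.zero_apply, sub_mulVec, one_mulVec, Pi.sub_apply, sub_nonneg] at this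
  have hmin : (∑ j, M k j) * u k ≤ ∑ j, M k j * u j := by
    rw [sum_mul]
    gcongr with j
    exacts [hM0 k j, hk j]
  have hk0 : 0 ≤ (1 - ∑ j, M k j) * u k := by linarith
  exact (nonneg_of_mul_nonneg_right hk0 (sub_pos.2 (hM1 k))).trans (hk i)

theorem isUnit_det_one_sub {M : Matrix n n ℝ} (hM0 : ∀ i j, 0 ≤ M i j)
    (hM1 : ∀ i, ∑ j, M i j < 1) : IsUnit (1 - M).det := by
  rw [← isUnit_iff_isUnit_det, ← mulVec_injective_iff_isUnit]
  have hle {x y : n → ℝ} (hxy : (1 - M) *ᵥ x = (1 - M) *ᵥ y) : y ≤ x :=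
    sub_nonneg.1 <| nonneg_of_nonneg_one_sub_mulVec hM0 hM1 (by rw [mulVec_sub, hxy, sub_self])
  exact fun u u' h => le_antisymm (hle h.symm) (hle h)

theorem inv_one_sub_nonneg {M : Matrix n n ℝ} (hM0 : ∀ i j, 0 ≤ M i j)
    (hM1 : ∀ i, ∑ j, M i j < 1) (i j : n) : 0 ≤ (1 - M)⁻¹ i j := by
  have hcol := nonneg_of_nonneg_one_sub_mulVec hM0 hM1 (u := (1 - M)⁻¹ *ᵥ Pi.single j 1) (by
    rw [mulVec_mulVec, mul_nonsing_inv _ (isUnit_det_one_sub hM0 hM1), one_mulVec]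
    exact Pi.single_nonneg.2 zero_le_one)
  simpa using hcol i

theorem one_sub_inv_mul_one_sub_smul {K : Type*} [Field K] {P : Matrix n n K} {a : K}
    (ha : IsUnit (1 - a • P).det) (b : K) :
    1 - (1 - a • P)⁻¹ * (1 - b • P) = (b - a) • ((1 - a • P)⁻¹ * P) :=
  calc 1 - (1 - a • P)⁻¹ * (1 - b • P) = (1 - a • P)⁻¹ * ((1 - a • P) - (1 - b • P)) := by
        rw [Matrix.mul_sub (1 - a • P)⁻¹ (1 - a • P), nonsing_inv_mul _ ha]
    _ = (b - a) • ((1 - a • P)⁻¹ * P) := by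
        rw [sub_sub_sub_cancel_left, ← sub_smul, Matrix.mul_smul]

theorem inv_one_sub_smul_mulVec_one {K : Type*} [Field K] {P : Matrix n n K} (hP : P *ᵥ 1 = 1)
    {a : K} (ha : a ≠ 1) (hA : IsUnit (1 - a • P).det) :
    (1 - a • P)⁻¹ *ᵥ 1 = (1 - a)⁻¹ • 1 := by
  have hA1 : (1 - a • P) *ᵥ 1 = (1 - a) • 1 := by
    rw [sub_mulVec, one_mulVec, smul_mulVec, hP, sub_smul, one_smul]
  calc (1 - a • P)⁻¹ *ᵥ 1 = (1 - a)⁻¹ • ((1 - a • P)⁻¹ *ᵥ ((1 - a) • 1)) := by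
        rw [mulVec_smul, smul_smul, inv_mul_cancel₀ (sub_ne_zero.2 ha.symm), one_smul]
    _ = (1 - a)⁻¹ • 1 := by rw [← hA1, mulVec_mulVec, nonsing_inv_mul _ hA, one_mulVec]

theorem sum_one_sub_inv_mul_one_sub_smul {K : Type*} [Field K] {P : Matrix n n K}
    (hP1 : ∀ i, ∑ j, P i j = 1) {a : K} (ha : a ≠ 1) (hA : IsUnit (1 - a • P).det) (b : K) (i : n) :
    ∑ j, (1 - (1 - a • P)⁻¹ * (1 - b • P)) i j = (b - a) / (1 - a) := by
  have hP : P *ᵥ 1 = 1 := funext fun i => by simp [mulVec, dotProduct, hP1]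
  have h : ((1 - a • P)⁻¹ * P) *ᵥ 1 = (1 - a)⁻¹ • 1 := by
    rw [← mulVec_mulVec, hP, inv_one_sub_smul_mulVec_one hP ha hA]
  have hi := congrFun h i
  simp only [mulVec, dotProduct, mul_one, Pi.smul_apply, Pi.one_apply, smul_eq_mul] at hi
  simp only [one_sub_inv_mul_one_sub_smul hA, smul_apply, smul_eq_mul, ← mul_sum, hi,
    div_eq_mul_inv]

theorem isUnit_det_one_sub_smul_s15 {P : Matrix n n ℝ} (hP0 : ∀ i j, 0 ≤ P i j)
    (hP1 : ∀ i, ∑ j, P i j = 1) {a : ℝ} (ha0 : 0 ≤ a) (ha1 : a < 1) :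
    IsUnit (1 - a • P).det :=
  isUnit_det_one_sub (fun i j => mul_nonneg ha0 (hP0 i j))
    (fun i => by simpa only [smul_apply, smul_eq_mul, ← mul_sum, hP1, mul_one] using ha1)

theorem one_sub_inv_mul_one_sub_smul_nonneg {P : Matrix n n ℝ} (hP0 : ∀ i j, 0 ≤ P i j)
    (hP1 : ∀ i, ∑ j, P i j = 1) {a b : ℝ} (ha0 : 0 ≤ a) (ha1 : a < 1) (hab : a ≤ b) (i j : n) :
    0 ≤ (1 - (1 - a • P)⁻¹ * (1 - b • P)) i j := by
  have haP0 (i j : n) : 0 ≤ (a • P) i j := mul_nonneg ha0 (hP0 i j)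
  have haP1 (i : n) : ∑ j, (a • P) i j < 1 := by
    simpa only [smul_apply, smul_eq_mul, ← mul_sum, hP1, mul_one] using ha1
  rw [one_sub_inv_mul_one_sub_smul (isUnit_det_one_sub haP0 haP1)]
  exact mul_nonneg (sub_nonneg.2 hab)
    (sum_nonneg fun k _ => mul_nonneg (inv_one_sub_nonneg haP0 haP1 i k) (hP0 k j))

theorem sum_mul_sq_le_sum_mul_sq_sub_inv_mul {Q : Matrix n n ℝ} (hQ0 : ∀ i j, 0 ≤ Q i j)
    {ζ : ℝ} (hζ0 : 0 < ζ) (hζ1 : ζ < 1) (hQ1 : ∀ i, ∑ j, Q i j ≤ ζ) {d : n → ℝ}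
    (hd : ∀ i, 0 ≤ d i) (v : n → ℝ) :
    ∑ s, d s * v s ^ 2 ≤ ∑ s, (d ᵥ* (1 - Q)⁻¹) s * v s ^ 2 -
      (1 / ζ) * ∑ s, (d ᵥ* (1 - Q)⁻¹) s * (Q *ᵥ v) s ^ 2 := by
  set m := d ᵥ* (1 - Q)⁻¹
  have hQ1' : ∀ i, ∑ j, Q i j < 1 := fun i => (hQ1 i).trans_lt hζ1
  have hm0 : ∀ j, 0 ≤ m j := fun j =>
    sum_nonneg fun i _ => mul_nonneg (hd i) (inv_one_sub_nonneg hQ0 hQ1' i j)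
  have hmQ : m ᵥ* Q = m - d := by
    have hm : m ᵥ* (1 - Q) = d := by
      rw [vecMul_vecMul, nonsing_inv_mul _ (isUnit_det_one_sub hQ0 hQ1'), vecMul_one]
    rw [← hm, vecMul_sub, vecMul_one, sub_sub_cancel]
  have key := sum_mul_sq_mulVec_le hQ0 hQ1 hm0 v
  simp only [hmQ, Pi.sub_apply, sub_mul, sum_sub_distrib] at key
  have : ζ⁻¹ * ∑ s, m s * (Q *ᵥ v) s ^ 2 ≤ ∑ s, m s * v s ^ 2 - ∑ s, d s * v s ^ 2 := by
    rwa [inv_mul_le_iff₀ hζ0]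
  rw [one_div]
  linarith

end Matrix

theorem stmt_15_general {S : Type*} [Fintype S] [DecidableEq S]
    (P : Matrix S S ℝ) (hP0 : ∀ s s', 0 ≤ P s s') (hP1 : ∀ s, ∑ s', P s s' = 1)
    (dμ : S → ℝ) (hd0 : ∀ s, 0 < dμ s)
    (lam : ℝ) (hlam : lam ∈ Set.Ico (0 : ℝ) 1)
    (β : ℝ) (hβ : β ∈ Set.Ioo (0 : ℝ) 1)
    (Plb : Matrix S S ℝ) (hPlb : Plb = 1 - (1 - (lam * β) • P)⁻¹ * (1 - β • P))
    (m : S → ℝ) (hm : m = Matrix.vecMul dμ (1 - Plb)⁻¹)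
    (ζ : ℝ) (hζ : ζ = β * (1 - lam) / (1 - lam * β))
    (v : S → ℝ) :
    ∑ s, dμ s * v s ^ 2 ≤
      ∑ s, m s * v s ^ 2 - (1 / ζ) * ∑ s, m s * (Plb.mulVec v s) ^ 2 := by
  obtain ⟨hlam0, hlam1⟩ := hlam
  obtain ⟨hβ0, hβ1⟩ := hβ
  have hc0 : 0 ≤ lam * β := by positivity
  have hc1 : lam * β < 1 := by nlinarith
  have hPlb0 : ∀ i j, 0 ≤ Plb i j :=
    hPlb ▸ one_sub_inv_mul_one_sub_smul_nonneg hP0 hP1 hc0 hc1 (by nlinarith)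
  have hPlb1 : ∀ i, ∑ j, Plb i j = ζ := fun i => by
    rw [hPlb, hζ, sum_one_sub_inv_mul_one_sub_smul hP1 hc1.ne
      (isUnit_det_one_sub_smul_s15 hP0 hP1 hc0 hc1)]
    ring
  have hζ0 : 0 < ζ := hζ ▸ div_pos (mul_pos hβ0 (sub_pos.2 hlam1)) (sub_pos.2 hc1)
  have hζ1 : ζ < 1 := by
    rw [hζ, div_lt_one (sub_pos.2 hc1)]
    nlinarith
  subst hm
  exact sum_mul_sq_le_sum_mul_sq_sub_inv_mul hPlb0 hζ0 hζ1 (fun i => (hPlb1 i).le)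
    (fun s => (hd0 s).le) v

theorem stmt_15 {S : Type*} [Fintype S] [DecidableEq S]
    (P : Matrix S S ℝ) (hP0 : ∀ s s', 0 ≤ P s s') (hP1 : ∀ s, ∑ s', P s s' = 1)
    (dμ : S → ℝ) (hd0 : ∀ s, 0 < dμ s) (hd1 : ∑ s, dμ s = 1)
    (lam : ℝ) (hlam : lam ∈ Set.Ico (0 : ℝ) 1)
    (β : ℝ) (hβ : β ∈ Set.Ioo (0 : ℝ) 1)
    (Plb : Matrix S S ℝ) (hPlb : Plb = 1 - (1 - (lam * β) • P)⁻¹ * (1 - β • P))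
    (m : S → ℝ) (hm : m = Matrix.vecMul dμ (1 - Plb)⁻¹)
    (ζ : ℝ) (hζ : ζ = β * (1 - lam) / (1 - lam * β))
    (v : S → ℝ) :
    ∑ s, dμ s * v s ^ 2 ≤
      ∑ s, m s * v s ^ 2 - (1 / ζ) * ∑ s, m s * (Plb.mulVec v s) ^ 2 :=
  stmt_15_general P hP0 hP1 dμ hd0 lam hlam β hβ Plb hPlb m hm ζ hζ v
end

section
/- Let t ∈ C with |t| ≤ 1, λ ∈ [0,1), and 0 < γ ≤ β < 1. Then |γt(1-λ)/(1-γλt)|² ≤ (γ²(1+βλ)²)/(β²(1+γλ)²) · |βt(1-λ)/(1-βλt)|², i.e., the ratio |l^γ|²/|l^β|² of the eigenvalues l^γ = γt(1-λ)/(1-γλt) and l^β = βt(1-λ)/(1-βλt) is at most γ²(1+βλ)²/(β²(1+γλ)²). -/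
/-!
Writing `a = γλ`, `b = βλ`, the claim reduces to `(1 + a) ‖1 - b t‖ ≤ (1 + b) ‖1 - a t‖`, i.e. to
`c ↦ ‖1 - c t‖ / (1 + c)` being antitone on `[0, 1]` for `‖t‖ ≤ 1`. After squaring, the difference
of the two sides factors as `(b - a) ((1 - |t|²)(a + b + 2ab) + 2 (1 + Re t)(1 - ab))`, and every
factor is nonnegative.
-/

namespace Complex

theorem norm_one_sub_ofReal_mul_sq (c : ℝ) (t : ℂ) :
    ‖1 - c * t‖ ^ 2 = 1 - 2 * c * t.re + c ^ 2 * ‖t‖ ^ 2 := by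
  rw [Complex.sq_norm, Complex.sq_norm, normSq_sub]
  simp [normSq_ofReal, mul_re]
  ring

theorem norm_one_sub_ofReal_mul_pos {t : ℂ} (ht : ‖t‖ ≤ 1) {c : ℝ} (hc : |c| < 1) :
    0 < ‖1 - c * t‖ := by
  have hct : ‖(c : ℂ) * t‖ < 1 := by
    rw [norm_mul, norm_real, Real.norm_eq_abs]
    nlinarith [norm_nonneg t, abs_nonneg c]
  linarith [norm_sub_norm_le (1 : ℂ) (c * t), norm_one (α := ℂ)]

theorem one_add_mul_norm_one_sub_le {t : ℂ} (ht : ‖t‖ ≤ 1) {a b : ℝ} (ha : 0 ≤ a)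
    (hab : a ≤ b) (hb : b ≤ 1) : (1 + a) * ‖1 - b * t‖ ≤ (1 + b) * ‖1 - a * t‖ := by
  refine (pow_le_pow_iff_left₀ (mul_nonneg (by linarith) (norm_nonneg _))
    (mul_nonneg (by linarith) (norm_nonneg _)) two_ne_zero).1 ?_
  set s := ‖t‖ ^ 2
  have hs : s ≤ 1 := pow_le_one₀ (norm_nonneg t) ht
  have hre : -1 ≤ t.re := by linarith [abs_le.1 ((abs_re_le_norm t).trans ht)]
  have hab1 : a * b ≤ 1 := by nlinarith
  have hfactor : (1 + b) ^ 2 * (1 - 2 * a * t.re + a ^ 2 * s)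
        - (1 + a) ^ 2 * (1 - 2 * b * t.re + b ^ 2 * s)
      = (b - a) * ((1 - s) * (a + b + 2 * a * b) + 2 * (1 + t.re) * (1 - a * b)) := by
    ring
  have hnonneg :
      0 ≤ (b - a) * ((1 - s) * (a + b + 2 * a * b) + 2 * (1 + t.re) * (1 - a * b)) := by
    apply mul_nonneg (by linarith)
    apply add_nonneg <;> apply mul_nonneg <;> nlinarith
  rw [mul_pow, mul_pow, norm_one_sub_ofReal_mul_sq, norm_one_sub_ofReal_mul_sq]
  linarith

theorem norm_mul_div_one_sub_le {t : ℂ} (ht : ‖t‖ ≤ 1) {lam γ β : ℝ} (hlam0 : 0 ≤ lam)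
    (hlam1 : lam ≤ 1) (hγ : 0 < γ) (hγβ : γ ≤ β) (hβ : β < 1) :
    ‖(γ : ℂ) * t * (1 - (lam : ℂ)) / (1 - (γ : ℂ) * (lam : ℂ) * t)‖ ≤
      γ * (1 + β * lam) / (β * (1 + γ * lam)) *
        ‖(β : ℂ) * t * (1 - (lam : ℂ)) / (1 - (β : ℂ) * (lam : ℂ) * t)‖ := by
  have hβ0 : 0 < β := hγ.trans_le hγβ
  have habs : ∀ c : ℝ, 0 ≤ c → c < 1 → |c * lam| < 1 := fun c hc0 hc1 => by
    rw [abs_of_nonneg (mul_nonneg hc0 hlam0)]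
    nlinarith
  have hnorm : ∀ c : ℝ, 0 < c → ‖(c : ℂ) * t * (1 - (lam : ℂ))‖ = c * ‖t * (1 - (lam : ℂ))‖ :=
    fun c hc => by rw [mul_assoc, norm_mul, norm_real, Real.norm_of_nonneg hc.le]
  simp only [← ofReal_mul]
  have hDγ := norm_one_sub_ofReal_mul_pos ht (habs γ hγ.le (hγβ.trans_lt hβ))
  have hDβ := norm_one_sub_ofReal_mul_pos ht (habs β hβ0.le hβ)
  have hmono := one_add_mul_norm_one_sub_le ht (mul_nonneg hγ.le hlam0)
    (mul_le_mul_of_nonneg_right hγβ hlam0) (by nlinarith)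
  rw [norm_div, norm_div, hnorm γ hγ, hnorm β hβ0, div_le_iff₀ hDγ,
    show ∀ N Dγ Dβ : ℝ, γ * (1 + β * lam) / (β * (1 + γ * lam)) * (β * N / Dβ) * Dγ
      = γ * N * ((1 + β * lam) * Dγ / ((1 + γ * lam) * Dβ)) from fun N Dγ Dβ => by
        field_simp]
  exact le_mul_of_one_le_right (by positivity) ((one_le_div (by positivity)).2 hmono)

end Complex

theorem stmt_16 (t : ℂ) (ht : ‖t‖ ≤ 1)
    (lam : ℝ) (hlam : lam ∈ Set.Ico (0 : ℝ) 1)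
    (γ β : ℝ) (hγ : 0 < γ) (hγβ : γ ≤ β) (hβ : β < 1) :
    ‖(γ : ℂ) * t * (1 - (lam : ℂ)) / (1 - (γ : ℂ) * (lam : ℂ) * t)‖ ^ 2 ≤
      (γ ^ 2 * (1 + β * lam) ^ 2) / (β ^ 2 * (1 + γ * lam) ^ 2) *
        ‖(β : ℂ) * t * (1 - (lam : ℂ)) / (1 - (β : ℂ) * (lam : ℂ) * t)‖ ^ 2 := by
  calc _ ≤ (γ * (1 + β * lam) / (β * (1 + γ * lam)) *
        ‖(β : ℂ) * t * (1 - (lam : ℂ)) / (1 - (β : ℂ) * (lam : ℂ) * t)‖) ^ 2 :=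
        pow_le_pow_left₀ (norm_nonneg _)
          (Complex.norm_mul_div_one_sub_le ht hlam.1 hlam.2.le hγ hγβ hβ) 2
    _ = _ := by rw [mul_pow, div_pow, mul_pow, mul_pow]
end
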